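/- arXiv:2303.03592 — 7 statements merged into one kernel-verified Lean document; each statement's English description precedes it below -/
import Mathlib

section
/- Least-squares regression is poisoning reachable with a single poisoning point at any positive ratio: for every w ∈ ℝ^d, every finitely supported probability measure μ on ℝ^d × ℝ, and every λ ∈ (0,1], there exists a point (x, y) ∈ ℝ^d × ℝ such that (1−λ)·E_{(x',y')∼μ}[(⟨w,x'⟩ − y')·x'] + λ·(⟨w,x⟩ − y)·x = 0. -/
open scoped RealInnerProductSpace BigOperators

/-- A finitely supported probability measure, represented as a finitely supported
weight function which is nonnegative and sums to 1. -/
def IsFinProb {Z : Type*} (p : Z →₀ ℝ) : Prop :=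
  (∀ z, 0 ≤ p z) ∧ p.sum (fun _ w => w) = 1

/-- Expectation `E_{z ∼ p}[g z]` of a vector-valued map under a finitely supported measure. -/
noncomputable def expect {Z E : Type*} [AddCommMonoid E] [Module ℝ E]
    (p : Z →₀ ℝ) (g : Z → E) : E :=
  p.sum fun z w => w • g z

/-- least-squares regression is poisoning reachable with a single
poisoning point at any positive ratio λ ∈ (0,1]. -/
theorem stmt4 {d : ℕ} (w : EuclideanSpace ℝ (Fin d))
    (μ : (EuclideanSpace ℝ (Fin d) × ℝ) →₀ ℝ) (hμ : IsFinProb μ)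
    (lam : ℝ) (h0 : 0 < lam) (h1 : lam ≤ 1) :
    ∃ (x : EuclideanSpace ℝ (Fin d)) (y : ℝ),
      (1 - lam) • expect μ (fun p => (⟪w, p.1⟫ - p.2) • p.1) +
        lam • ((⟪w, x⟫ - y) • x) = 0 := by
  set v := expect μ (fun p => (⟪w, p.1⟫ - p.2) • p.1) with hv
  refine ⟨v, ⟪w, v⟫ + (1 - lam) / lam, ?_⟩
  have hlam : lam ≠ 0 := ne_of_gt h0
  have h : ⟪w, v⟫ - (⟪w, v⟫ + (1 - lam) / lam) = -((1 - lam) / lam) := by ring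
  rw [h, smul_smul]
  have : lam * -((1 - lam) / lam) = -(1 - lam) := by field_simp
  rw [this]
  module
end

section
/- There exists a unique x₀ > 0 with x₀·exp(x₀) = exp(−1), and the function t ↦ −t/(1 + exp(t)) on ℝ satisfies −t/(1 + exp(t)) ≥ −x₀ for all t ∈ ℝ, with equality attained at t = 1 + x₀. Equivalently, sup_{t∈ℝ} t/(1 + exp(t)) = x₀ and the supremum is attained at t = 1 + x₀. -/
lemma stmt5_mono : StrictMonoOn (fun x : ℝ => x * Real.exp x) (Set.Ici 0) := by
  intro a ha b _ hab
  exact mul_lt_mul'' hab (Real.exp_lt_exp.2 hab) ha (Real.exp_pos a).le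

lemma stmt5_key (x₀ : ℝ) (hx : 0 < x₀) (heq : x₀ * Real.exp x₀ = Real.exp (-1)) :
    x₀ * Real.exp (1 + x₀) = 1 := by
  rw [Real.exp_add, ← mul_assoc, mul_comm x₀ (Real.exp 1), mul_assoc, heq,
    ← Real.exp_add]
  simp

/-- there is a unique `x₀ > 0` with `x₀·exp(x₀) = exp(−1)`
(Lambert's W at 1/e), and `−t/(1 + exp t) ≥ −x₀` for all `t`, with equality
attained at `t = 1 + x₀`. -/
theorem stmt5 :
    (∃! x₀ : ℝ, 0 < x₀ ∧ x₀ * Real.exp x₀ = Real.exp (-1)) ∧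
    ∀ x₀ : ℝ, 0 < x₀ → x₀ * Real.exp x₀ = Real.exp (-1) →
      (∀ t : ℝ, -t / (1 + Real.exp t) ≥ -x₀) ∧
      -(1 + x₀) / (1 + Real.exp (1 + x₀)) = -x₀ := by
  constructor
  · -- existence via IVT on [0,1]
    have hcont : ContinuousOn (fun x : ℝ => x * Real.exp x) (Set.Icc 0 1) :=
      (continuous_id.mul Real.continuous_exp).continuousOn
    have hmem : Real.exp (-1) ∈ Set.Icc ((fun x : ℝ => x * Real.exp x) 0)
        ((fun x : ℝ => x * Real.exp x) 1) := by
      constructor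
      · simp [(Real.exp_pos (-1)).le]
      · simp only [one_mul]
        exact Real.exp_le_exp.2 (by norm_num)
    obtain ⟨x, hxI, hfx⟩ := intermediate_value_Icc (by norm_num : (0:ℝ) ≤ 1) hcont hmem
    have hxpos : 0 < x := by
      rcases lt_or_eq_of_le hxI.1 with h | h
      · exact h
      · exfalso
        rw [← h] at hfx
        simp at hfx
        linarith [Real.exp_pos (-1)]
    refine ⟨x, ⟨hxpos, hfx⟩, ?_⟩
    rintro y ⟨hy, hfy⟩
    exact stmt5_mono.injOn (Set.mem_Ici.2 hy.le) (Set.mem_Ici.2 hxpos.le)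
      (by simpa using hfy.trans hfx.symm)
  · intro x₀ hx heq
    have hkey := stmt5_key x₀ hx heq
    have hx0 : x₀ = Real.exp (-(1 + x₀)) := by
      rw [Real.exp_neg]
      field_simp
      linarith [hkey]
    constructor
    · intro t
      have hd : 0 < 1 + Real.exp t := by positivity
      rw [ge_iff_le, le_div_iff₀ hd]
      have h1 : t - (1 + x₀) + 1 ≤ Real.exp (t - (1 + x₀)) := Real.add_one_le_exp _
      have h2 : Real.exp (t - (1 + x₀)) = x₀ * Real.exp t := by
        rw [sub_eq_add_neg, Real.exp_add, ← hx0, mul_comm]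
      nlinarith
    · have hd : 0 < 1 + Real.exp (1 + x₀) := by positivity
      field_simp
      ring_nf
      nlinarith [hkey]
end

section
/- For every real β > 0 there exists a unique x_β > 0 with x_β·exp(x_β) = β/e, and for all t ∈ ℝ one has t·exp(t)/(1/β + exp(t)) ≥ −x_β, with equality attained at t = −(1 + x_β). In particular, inf_{t∈ℝ} t·exp(t)/(1/β + exp(t)) = −𝒲(β/e). -/
lemma mono_aux : ∀ a b : ℝ, 0 < a → a < b → a * Real.exp a < b * Real.exp b := by
  intro a b ha hab
  have h1 : Real.exp a < Real.exp b := Real.exp_lt_exp.mpr hab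
  nlinarith [Real.exp_pos a, Real.exp_pos b]

/-- for every `β > 0` there is a unique `x_β > 0` with
`x_β·exp(x_β) = β/e`, and `t·exp(t)/(1/β + exp t) ≥ −x_β` for all `t`,
with equality attained at `t = −(1 + x_β)`; in particular the infimum of
`t ↦ t·exp(t)/(1/β + exp t)` is `−𝒲(β/e)`. -/
theorem stmt6 :
    ∀ β : ℝ, 0 < β →
      (∃! x : ℝ, 0 < x ∧ x * Real.exp x = β / Real.exp 1) ∧
      ∀ x : ℝ, 0 < x → x * Real.exp x = β / Real.exp 1 →
        (∀ t : ℝ, t * Real.exp t / (1 / β + Real.exp t) ≥ -x) ∧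
        (-(1 + x)) * Real.exp (-(1 + x)) / (1 / β + Real.exp (-(1 + x))) = -x := by
  intro β hβ
  have hβe : 0 < β / Real.exp 1 := div_pos hβ (Real.exp_pos 1)
  constructor
  · -- existence via IVT
    have hc : ContinuousOn (fun x : ℝ => x * Real.exp x) (Set.Icc 0 β) :=
      (continuous_id.mul Real.continuous_exp).continuousOn
    have hiv := intermediate_value_Icc (le_of_lt hβ) hc
    have hmem : β / Real.exp 1 ∈ Set.Icc ((0:ℝ) * Real.exp 0) (β * Real.exp β) := by
      constructor
      · simp [le_of_lt hβe]
      · rw [div_le_iff₀ (Real.exp_pos 1)]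
        have h1 : (1:ℝ) ≤ Real.exp β * Real.exp 1 := by
          rw [← Real.exp_add]
          have : (0:ℝ) ≤ β + 1 := by linarith
          calc (1:ℝ) = Real.exp 0 := by simp
            _ ≤ Real.exp (β + 1) := Real.exp_le_exp.mpr this
        nlinarith
    obtain ⟨x, hxmem, hxeq'⟩ := hiv hmem
    have hxeq : x * Real.exp x = β / Real.exp 1 := hxeq'
    have hx0 : 0 < x := by
      rcases lt_or_eq_of_le hxmem.1 with h | h
      · exact h
      · exfalso; rw [← h] at hxeq; simp at hxeq; rw [← hxeq] at hβe; simp at hβe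
    refine ⟨x, ⟨hx0, hxeq⟩, ?_⟩
    intro y ⟨hy0, hyeq⟩
    by_contra hne
    rcases lt_or_gt_of_ne hne with h | h
    · have := mono_aux y x hy0 h
      rw [hyeq, hxeq] at this; exact lt_irrefl _ this
    · have := mono_aux x y hx0 h
      rw [hyeq, hxeq] at this; exact lt_irrefl _ this
  · intro x hx hfx
    have hβeq : x * Real.exp x * Real.exp 1 = β := (eq_div_iff (Real.exp_pos 1).ne').mp hfx
    have hbx : x * (1/β) = Real.exp (-(1 + x)) := by
      rw [Real.exp_neg, Real.exp_add]
      rw [← hβeq]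
      field_simp
    have hD : ∀ t : ℝ, 0 < 1/β + Real.exp t := fun t =>
      add_pos (by positivity) (Real.exp_pos t)
    constructor
    · intro t
      rw [ge_iff_le, le_div_iff₀ (hD t)]
      have h1 : (1 - (t + x + 1)) * Real.exp (t + x + 1) ≤ 1 := by
        have h0 := Real.add_one_le_exp (-(t + x + 1))
        have h2 := mul_le_mul_of_nonneg_right h0 (Real.exp_pos (t + x + 1)).le
        rw [← Real.exp_add, neg_add_cancel, Real.exp_zero] at h2
        nlinarith [h2]
      have hexp : Real.exp t = Real.exp (t + x + 1) * Real.exp (-(1 + x)) := by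
        rw [← Real.exp_add]; ring_nf
      have hpos : 0 < Real.exp (-(1 + x)) := Real.exp_pos _
      have key : -(t + x) * Real.exp t ≤ x * (1/β) := by
        rw [hbx, hexp]
        nlinarith [mul_le_mul_of_nonneg_right h1 hpos.le]
      nlinarith [key]
    · rw [div_eq_iff (hD (-(1 + x))).ne']
      nlinarith [hbx]
end

section
/- Let c ≥ 2 be a natural number and let x_{c−1} > 0 be the unique positive real with x_{c−1}·exp(x_{c−1}) = (c−1)/e. Then for every h ∈ ℝ^c and every index i ∈ {1, …, c}, one has Σ_{k=1}^c h_k·(p_k − [k = i]) ≥ −x_{c−1}, where p = softmax(h), i.e., p_k = exp(h_k)/Σ_{j=1}^c exp(h_j) and [k = i] equals 1 if k = i and 0 otherwise. -/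
open scoped BigOperators

lemma stmt7_key (t x : ℝ) : -Real.exp (-1 - x) ≤ (t + x) * Real.exp t := by
  have h := Real.add_one_le_exp (-(t + x + 1))
  have e1 : Real.exp (-1 - x) = Real.exp t * Real.exp (-(t + x + 1)) := by
    rw [← Real.exp_add]; ring_nf
  nlinarith [Real.exp_pos t, mul_le_mul_of_nonneg_left h (Real.exp_pos t).le]

/-- lower bound `⟨h, softmax(h) − e_i⟩ ≥ −𝒲((c−1)/e)` for the
cross-entropy gradient inner product, where `𝒲((c−1)/e)` is the unique positive
solution of `x·exp(x) = (c−1)/e`. -/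
theorem stmt7 (c : ℕ) (hc : 2 ≤ c) (x : ℝ) (hx : 0 < x)
    (hxe : x * Real.exp x = ((c : ℝ) - 1) / Real.exp 1) :
    ∀ (h : Fin c → ℝ) (i : Fin c),
      ∑ k, h k * (Real.exp (h k) / (∑ j, Real.exp (h j)) -
        if k = i then (1 : ℝ) else 0) ≥ -x := by
  intro h i
  have hcpos : 0 < c := by omega
  haveI : NeZero c := ⟨by omega⟩
  set S := ∑ j, Real.exp (h j) with hSdef
  have hS : 0 < S := Finset.sum_pos (fun j _ => Real.exp_pos _) Finset.univ_nonempty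
  set T := ∑ k, h k * Real.exp (h k) with hTdef
  have hsum : ∑ k, h k * (Real.exp (h k) / S - if k = i then (1:ℝ) else 0)
      = T / S - h i := by
    simp only [mul_sub, Finset.sum_sub_distrib, mul_ite, mul_one, mul_zero,
      Finset.sum_ite_eq', Finset.mem_univ, if_true, hTdef, Finset.sum_div,
      mul_div_assoc]
  rw [hsum, ge_iff_le]
  -- key inequality : (h i - x) * S ≤ T
  have hc1 : ((c : ℝ) - 1) = x * Real.exp x * Real.exp 1 := by
    rw [eq_comm, hxe]
    field_simp
  have expand : T - (h i - x) * S = ∑ k, (h k - (h i - x)) * Real.exp (h k) := by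
    simp only [sub_mul, Finset.sum_sub_distrib, hTdef, hSdef, Finset.mul_sum]
  have hb : ∀ k ∈ Finset.univ.erase i,
      -(Real.exp (h i - 1 - x)) ≤ (h k - (h i - x)) * Real.exp (h k) := by
    intro k _
    have hk := stmt7_key (h k - h i) x
    have e1 : Real.exp (h k - h i) * Real.exp (h i) = Real.exp (h k) := by
      rw [← Real.exp_add]; ring_nf
    have e2 : Real.exp (-1 - x) * Real.exp (h i) = Real.exp (h i - 1 - x) := by
      rw [← Real.exp_add]; ring_nf
    have h2 := mul_le_mul_of_nonneg_right hk (Real.exp_pos (h i)).le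
    rw [neg_mul, e2, mul_assoc, e1] at h2
    ring_nf at h2 ⊢
    linarith
  have hcard : (Finset.univ.erase i).card = c - 1 := by
    simp [Finset.card_erase_of_mem]
  have hsum2 : ((c - 1 : ℕ) : ℝ) * (-(Real.exp (h i - 1 - x)))
      ≤ ∑ k ∈ Finset.univ.erase i, (h k - (h i - x)) * Real.exp (h k) := by
    have := Finset.card_nsmul_le_sum (Finset.univ.erase i)
      (fun k => (h k - (h i - x)) * Real.exp (h k)) _ hb
    rw [hcard] at this
    simpa [nsmul_eq_mul] using this
  have hcast : ((c - 1 : ℕ) : ℝ) = (c : ℝ) - 1 := by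
    rw [Nat.cast_sub (by omega)]; simp
  have hsplit : ∑ k, (h k - (h i - x)) * Real.exp (h k)
      = (h i - (h i - x)) * Real.exp (h i)
        + ∑ k ∈ Finset.univ.erase i, (h k - (h i - x)) * Real.exp (h k) := by
    rw [← Finset.add_sum_erase _ _ (Finset.mem_univ i)]
  have e3 : Real.exp (h i - 1 - x) * (Real.exp 1 * Real.exp x) = Real.exp (h i) := by
    rw [← Real.exp_add, ← Real.exp_add]; ring_nf
  have hx' : 0 ≤ T - (h i - x) * S := by
    rw [expand, hsplit]
    have : x * Real.exp (h i) - ((c:ℝ) - 1) * Real.exp (h i - 1 - x) = 0 := by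
      rw [hc1]; nlinarith [e3]
    rw [hcast] at hsum2
    nlinarith [hsum2]
  have : h i - x ≤ T / S := (le_div_iff₀ hS).mpr (by linarith)
  linarith
end

section
/- Phase transition for logistic regression (necessity): let w ∈ ℝ^d, let x₀ > 0 be the unique positive real with x₀·exp(x₀) = exp(−1), and for a finitely supported probability measure ν on ℝ^d write g(ν) = E_{x∼ν}[−x/(1 + exp(⟨w, x⟩))]. Let μ be a finitely supported probability measure on ℝ^d with c := ⟨w, g(μ)⟩ > 0. If λ ∈ [0,1] satisfies λ < c/(c + x₀), then for every finitely supported probability measure ν on ℝ^d one has (1−λ)·g(μ) + λ·g(ν) ≠ 0. -/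
open scoped RealInnerProductSpace BigOperators

/-- Pointwise gradient of the logistic loss `ℓ(x; w) = log(1 + exp(−⟨w,x⟩))` in `w`:
`−x/(1 + exp⟨w,x⟩)`. -/
noncomputable def glog {d : ℕ} (w x : EuclideanSpace ℝ (Fin d)) :
    EuclideanSpace ℝ (Fin d) :=
  (-(1 + Real.exp ⟪w, x⟫)⁻¹) • x

lemma key_pw (x₀ : ℝ) (hx₀ : 0 < x₀) (hxe : x₀ * Real.exp x₀ = Real.exp (-1)) (t : ℝ) :
    -x₀ ≤ -(1 + Real.exp t)⁻¹ * t := by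
  have hpos : 0 < 1 + Real.exp t := by positivity
  have h1 : x₀ * Real.exp (1 + x₀) = 1 := by
    rw [Real.exp_add]
    calc x₀ * (Real.exp 1 * Real.exp x₀) = Real.exp 1 * (x₀ * Real.exp x₀) := by ring
    _ = Real.exp 1 * Real.exp (-1) := by rw [hxe]
    _ = 1 := by rw [← Real.exp_add]; simp
  have h2 : (t - (1 + x₀)) + 1 ≤ Real.exp (t - (1 + x₀)) := Real.add_one_le_exp _
  have h3 : Real.exp (1 + x₀) * Real.exp (t - (1 + x₀)) = Real.exp t := by
    rw [← Real.exp_add]; ring_nf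
  have hE : 0 < Real.exp (1 + x₀) := Real.exp_pos _
  have h4 : t ≤ x₀ * (1 + Real.exp t) := by nlinarith
  have h5 : (1 + Real.exp t)⁻¹ * t ≤ x₀ := by
    rw [inv_mul_le_iff₀ hpos]
    linarith [h4]
  linarith [h5]

lemma inner_expect_fin {d : ℕ} (w : EuclideanSpace ℝ (Fin d)) (ν : EuclideanSpace ℝ (Fin d) →₀ ℝ)
    (g : EuclideanSpace ℝ (Fin d) → EuclideanSpace ℝ (Fin d)) :
    ⟪w, expect ν g⟫ = ν.sum fun z c => c * ⟪w, g z⟫ := by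
  unfold expect Finsupp.sum
  rw [inner_sum]
  exact Finset.sum_congr rfl fun z _ => real_inner_smul_right w (g z) (ν z)

/-- phase transition for logistic regression (necessity). If
`c := ⟨w, g(μ)⟩ > 0` and `λ < c/(c + x₀)` with `x₀ = 𝒲(1/e)`, then no finitely
supported probability measure ν can cancel the mixed gradient. -/
theorem stmt9 {d : ℕ} (w : EuclideanSpace ℝ (Fin d))
    (x₀ : ℝ) (hx₀ : 0 < x₀) (hxe : x₀ * Real.exp x₀ = Real.exp (-1))
    (μ : EuclideanSpace ℝ (Fin d) →₀ ℝ) (hμ : IsFinProb μ)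
    (hc : 0 < ⟪w, expect μ (glog w)⟫)
    (lam : ℝ) (h0 : 0 ≤ lam) (h1 : lam ≤ 1)
    (hlt : lam < ⟪w, expect μ (glog w)⟫ / (⟪w, expect μ (glog w)⟫ + x₀)) :
    ∀ ν : EuclideanSpace ℝ (Fin d) →₀ ℝ, IsFinProb ν →
      (1 - lam) • expect μ (glog w) + lam • expect ν (glog w) ≠ 0 := by
  intro ν hν h
  set c := ⟪w, expect μ (glog w)⟫ with hcdef
  set s := ⟪w, expect ν (glog w)⟫ with hsdef
  have hbound : ∀ x : EuclideanSpace ℝ (Fin d), -x₀ ≤ ⟪w, glog w x⟫ := by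
    intro x
    rw [glog, real_inner_smul_right]
    exact key_pw x₀ hx₀ hxe ⟪w, x⟫
  have hs : -x₀ ≤ s := by
    rw [hsdef, inner_expect_fin]
    have hsum : (∑ z ∈ ν.support, ν z * (-x₀)) = -x₀ := by
      rw [← Finset.sum_mul, show (∑ z ∈ ν.support, ν z) = 1 from hν.2, one_mul]
    calc -x₀ = ∑ z ∈ ν.support, ν z * (-x₀) := hsum.symm
    _ ≤ _ := Finset.sum_le_sum fun i _ => mul_le_mul_of_nonneg_left (hbound i) (hν.1 i)
  have heq : (1 - lam) * c + lam * s = 0 := by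
    have := congrArg (fun v => ⟪w, v⟫) h
    simpa only [inner_add_right, real_inner_smul_right, inner_zero_right] using this
  rcases eq_or_lt_of_le h0 with h0' | h0'
  · rw [← h0'] at heq
    simp at heq
    linarith
  · have hcx : 0 < c + x₀ := by linarith
    have hlt' : lam * (c + x₀) < c := by
      rw [div_eq_mul_inv] at hlt
      calc lam * (c + x₀) < c * (c + x₀)⁻¹ * (c + x₀) := by
            exact mul_lt_mul_of_pos_right hlt hcx
      _ = c := by field_simp
    nlinarith [mul_le_mul_of_nonneg_left hs (le_of_lt h0')]
end

section
/- Phase transition for logistic regression (sufficiency with a single poisoning point): let w ∈ ℝ^d, let x₀ > 0 be the unique positive real with x₀·exp(x₀) = exp(−1), and for a finitely supported probability measure ν on ℝ^d write g(ν) = E_{x∼ν}[−x/(1 + exp(⟨w, x⟩))]. Let μ be a finitely supported probability measure on ℝ^d with c := ⟨w, g(μ)⟩ > 0. If λ ∈ (0,1] satisfies λ ≥ c/(c + x₀), then there exists a single point x_p ∈ ℝ^d (which can be taken of the form x_p = α·g(μ) for some α ∈ ℝ) such that (1−λ)·g(μ) + λ·(−x_p/(1 + exp(⟨w, x_p⟩)))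 = 0. -/
open scoped RealInnerProductSpace BigOperators

/-- phase transition for logistic regression (sufficiency with a single
poisoning point). If `c := ⟨w, g(μ)⟩ > 0` and `λ ∈ (0,1]` with `λ ≥ c/(c + x₀)`,
then a single poisoning point of the form `x_p = α·g(μ)` cancels the mixed gradient. -/
theorem stmt10 {d : ℕ} (w : EuclideanSpace ℝ (Fin d))
    (x₀ : ℝ) (hx₀ : 0 < x₀) (hxe : x₀ * Real.exp x₀ = Real.exp (-1))
    (μ : EuclideanSpace ℝ (Fin d) →₀ ℝ) (hμ : IsFinProb μ)
    (hc : 0 < ⟪w, expect μ (glog w)⟫)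
    (lam : ℝ) (h0 : 0 < lam) (h1 : lam ≤ 1)
    (hge : lam ≥ ⟪w, expect μ (glog w)⟫ / (⟪w, expect μ (glog w)⟫ + x₀)) :
    ∃ (α : ℝ) (xp : EuclideanSpace ℝ (Fin d)), xp = α • expect μ (glog w) ∧
      (1 - lam) • expect μ (glog w) + lam • glog w xp = 0 := by
  set g := expect μ (glog w) with hg
  set c : ℝ := ⟪w, g⟫ with hcdef
  -- the function φ(α) = lam * α / (1 + exp (α * c))
  set φ : ℝ → ℝ := fun α => lam * α / (1 + Real.exp (α * c)) with hφ
  have hcont : Continuous φ := by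
    apply Continuous.div (by continuity) (by continuity)
    intro x
    positivity
  have hb : (0:ℝ) ≤ (1 + x₀) / c := by positivity
  have hφ0 : φ 0 = 0 := by simp [hφ]
  have hexp : Real.exp ((1 + x₀) / c * c) = 1 / x₀ := by
    rw [div_mul_cancel₀ _ (ne_of_gt hc), Real.exp_add]
    have h1 : Real.exp x₀ = Real.exp (-1) / x₀ := by
      field_simp at hxe ⊢
      linarith [hxe]
    rw [h1, Real.exp_neg]
    field_simp
  have hφb : φ ((1 + x₀) / c) = lam * x₀ / c := by
    rw [hφ]
    simp only
    rw [hexp]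
    have : (1 : ℝ) + 1 / x₀ = (x₀ + 1) / x₀ := by field_simp
    rw [this]
    field_simp
    ring
  have hkey : 1 - lam ≤ lam * x₀ / c := by
    have h2 : lam * (c + x₀) ≥ c := by
      rw [ge_iff_le, div_le_iff₀ (by positivity)] at hge
      linarith
    rw [le_div_iff₀ hc]
    nlinarith
  have hmem : (1 - lam) ∈ Set.Icc (φ 0) (φ ((1 + x₀) / c)) := by
    rw [hφ0, hφb]
    exact ⟨by linarith, hkey⟩
  obtain ⟨α, -, hα⟩ := intermediate_value_Icc hb hcont.continuousOn hmem
  refine ⟨α, α • g, rfl, ?_⟩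
  have hinner : ⟪w, α • g⟫ = α * c := by
    rw [real_inner_smul_right]
  rw [glog, hinner, smul_smul, smul_smul, ← add_smul]
  have hcoef : 1 - lam + lam * -(1 + Real.exp (α * c))⁻¹ * α = 0 := by
    have := hα
    rw [hφ] at this
    simp only at this
    have hpos : (0:ℝ) < 1 + Real.exp (α * c) := by positivity
    field_simp at this ⊢
    linarith
  rw [hcoef, zero_smul]
end

section
/- Single-point logistic poisoning solvability criterion: let x₀ > 0 be the unique positive real with x₀·exp(x₀) = exp(−1). For all reals c > 0 and ε > 0, the equation ε·α = 1 + exp(α·c) has a real solution α if and only if ε ≥ c/x₀. Moreover, for all reals c < 0 and ε > 0, the equation ε·α = 1 + exp(α·c) always has a real solution α. -/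
/-- single-point logistic poisoning solvability criterion. Let `x₀` be
the unique positive real with `x₀·exp(x₀) = exp(−1)`. For `c > 0` and `ε > 0`, the
equation `ε·α = 1 + exp(α·c)` has a real solution iff `ε ≥ c/x₀`; for `c < 0` and
`ε > 0` it always has a real solution. -/
theorem stmt19 (x₀ : ℝ) (hx₀ : 0 < x₀) (hxe : x₀ * Real.exp x₀ = Real.exp (-1)) :
    (∀ c ε : ℝ, 0 < c → 0 < ε →
      ((∃ α : ℝ, ε * α = 1 + Real.exp (α * c)) ↔ ε ≥ c / x₀)) ∧
    (∀ c ε : ℝ, c < 0 → 0 < ε → ∃ α : ℝ, ε * α = 1 + Real.exp (α * c)) := by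
  have hx1 : x₀ * Real.exp (1 + x₀) = 1 := by
    rw [Real.exp_add]
    calc x₀ * (Real.exp 1 * Real.exp x₀) = Real.exp 1 * (x₀ * Real.exp x₀) := by ring
      _ = Real.exp 1 * Real.exp (-1) := by rw [hxe]
      _ = 1 := by rw [← Real.exp_add]; simp
  constructor
  · intro c ε hc hε
    constructor
    · rintro ⟨α, hα⟩
      have hpos : 0 < 1 + Real.exp (α * c) := by positivity
      have hαpos : 0 < α := by nlinarith
      have h1 : (α * c - (1 + x₀)) + 1 ≤ Real.exp (α * c - (1 + x₀)) :=
        Real.add_one_le_exp _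
      have h2 : x₀ * Real.exp (α * c) = Real.exp (α * c - (1 + x₀)) := by
        rw [Real.exp_sub]
        rw [eq_div_iff (ne_of_gt (Real.exp_pos _))]
        nlinarith [Real.exp_pos (α * c)]
      have key : α * c ≤ x₀ * (1 + Real.exp (α * c)) := by nlinarith
      rw [ge_iff_le, div_le_iff₀ hx₀]
      nlinarith
    · intro hge
      rw [ge_iff_le, div_le_iff₀ hx₀] at hge
      set f : ℝ → ℝ := fun α => ε * α - 1 - Real.exp (α * c) with hf
      have hb : (0:ℝ) ≤ (1 + x₀) / c := by positivity
      have hcont : ContinuousOn f (Set.Icc 0 ((1 + x₀) / c)) := by fun_prop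
      have hf0 : f 0 ≤ 0 := by simp [hf]
      have hfb : 0 ≤ f ((1 + x₀) / c) := by
        have hbc : (1 + x₀) / c * c = 1 + x₀ := div_mul_cancel₀ _ (ne_of_gt hc)
        have he : Real.exp (1 + x₀) = 1 / x₀ := by
          rw [eq_div_iff (ne_of_gt hx₀)]; linarith [hx1]
        simp only [hf, hbc, he]
        have h3 : 1 + 1 / x₀ ≤ ε * ((1 + x₀) / c) := by
          rw [mul_div_assoc', le_div_iff₀ hc]
          have h4 : 1 / x₀ * x₀ = 1 := div_mul_cancel₀ 1 (ne_of_gt hx₀)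
          nlinarith
        linarith
      obtain ⟨α, -, hα⟩ := intermediate_value_Icc hb hcont ⟨hf0, hfb⟩
      exact ⟨α, by simp only [hf] at hα; linarith⟩
  · intro c ε hc hε
    set f : ℝ → ℝ := fun α => ε * α - 1 - Real.exp (α * c) with hf
    have hb : (0:ℝ) ≤ 2 / ε := by positivity
    have hcont : ContinuousOn f (Set.Icc 0 (2 / ε)) := by fun_prop
    have hf0 : f 0 ≤ 0 := by simp [hf]
    have hfb : 0 ≤ f (2 / ε) := by
      have h1 : ε * (2 / ε) = 2 := mul_div_cancel₀ _ (ne_of_gt hε)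
      have h2 : Real.exp (2 / ε * c) ≤ 1 := by
        rw [← Real.exp_zero]
        apply Real.exp_le_exp.mpr
        have : 0 < 2 / ε := by positivity
        nlinarith
      simp only [hf, h1]
      linarith
    obtain ⟨α, -, hα⟩ := intermediate_value_Icc hb hcont ⟨hf0, hfb⟩
    exact ⟨α, by simp only [hf] at hα; linarith⟩
end
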